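/- Let D be the Toeplitz digraph of T_n⟨S;T⟩ with max S + min T ≤ n and min S + max T ≤ n. Then there exists a positive integer M such that for every integer m > M, existence of a directed walk of length m between two vertices depends only on their difference: for all vertices u, v, u', v' of D with v − u = v' − u', there is a directed (u,v)-walk of length m in D if and only if there is a directed (u',v')-walk of length m in D. (That is, every sufficiently high Boolean power of the matrix T_n⟨S;T⟩ is a Toeplitz matrix.) -/

import Mathlib

/-- The Toeplitz digraph of `T_n⟨S;T⟩`: vertices are integers in `[1, n]`, and
there is an arc `(u, v)` iff `v − u ∈ S` or `u − v ∈ T`. -/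
def ToepArc (n : ℕ) (S T : Finset ℕ) (u v : ℤ) : Prop :=
  u ∈ Finset.Icc (1 : ℤ) (n : ℤ) ∧ v ∈ Finset.Icc (1 : ℤ) (n : ℤ) ∧
    ((∃ s ∈ S, v = u + (s : ℤ)) ∨ (∃ t ∈ T, v = u - (t : ℤ)))

/-- There is a directed `(u,v)`-walk of length `m` in the Toeplitz digraph. -/
def HasWalk (n : ℕ) (S T : Finset ℕ) (m : ℕ) (u v : ℤ) : Prop :=
  ∃ w : ℕ → ℤ, w 0 = u ∧ w m = v ∧ ∀ i < m, ToepArc n S T (w i) (w (i + 1))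

/-!
A walk of length `m` from `u` to `v` yields a multiset of `m` steps from `S ∪ -T` with sum
`v - u`, a condition that depends on `v - u` only. Conversely, let `a = min S` and
`b = min T`. Since `a + b` copies of a step `x` have the same length and sum as `x + b` steps
`a` and `a - x` steps `-b`, reducing every multiplicity modulo `a + b` leaves a bounded
multiset `R` of rare steps plus `A` steps `a` and `B` steps `-b`, with `A, B` large once `m` is.
Before each rare step at most `n` cheap steps bring the walk to a vertex where the rare step
stays inside `[1, n]`; the leftover cheap steps are then arranged greedily (step up by `a`
when possible, otherwise down by `b`), which never leaves `[1, n]` because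
`max S + min T ≤ n` and `min S + max T ≤ n`.
-/

open Finset

theorem Multiset.exists_eq_add_nsmul {α : Type*} [DecidableEq α] (L : Multiset α) {P : ℕ}
    (hP : 0 < P) :
    ∃ R Q : Multiset α, L = R + P • Q ∧ R.card ≤ P * L.toFinset.card := by
  refine ⟨∑ x ∈ L.toFinset, (L.count x % P) • {x}, ∑ x ∈ L.toFinset, (L.count x / P) • {x},
    ?_, ?_⟩
  · conv_lhs => rw [← Multiset.toFinset_sum_count_nsmul_eq L]
    rw [Finset.smul_sum, ← Finset.sum_add_distrib]
    refine Finset.sum_congr rfl fun x _ => ?_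
    rw [smul_smul, ← add_smul, Nat.mod_add_div]
  · rw [Multiset.card_sum, mul_comm]
    refine Finset.sum_le_card_nsmul _ _ _ fun x _ => ?_
    simpa using (Nat.mod_lt _ hP).le

theorem Multiset.card_toFinset_le_of_abs_le {L : Multiset ℤ} {c : ℕ}
    (hL : ∀ x ∈ L, |x| ≤ c) : L.toFinset.card ≤ 2 * c + 1 := by
  have hsub : L.toFinset ⊆ Finset.Icc (-(c : ℤ)) c := fun x hx =>
    Finset.mem_Icc.2 (abs_le.1 (hL x (Multiset.mem_toFinset.1 hx)))
  have := Finset.card_le_card hsub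
  rw [Int.card_Icc] at this
  omega

theorem Multiset.abs_sum_le_card_mul {L : Multiset ℤ} {c : ℤ} (hL : ∀ x ∈ L, |x| ≤ c) :
    |L.sum| ≤ L.card * c := by
  calc |L.sum| ≤ (L.map abs).sum := Multiset.abs_sum_le_sum_abs
    _ ≤ L.card • c := by
      simpa using Multiset.sum_le_card_nsmul (L.map abs) c (by simpa using hL)
    _ = L.card * c := nsmul_eq_mul _ _

theorem exists_sub_mul_mem_Icc {x lo hi : ℤ} {d : ℕ} (hd : 0 < d) (hwin : lo + d ≤ hi + 1)
    (hx : lo ≤ x) : ∃ j : ℕ, (j : ℤ) ≤ x - lo ∧ x - j * d ∈ Icc lo hi := by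
  have hd' : (0 : ℤ) < d := by exact_mod_cast hd
  have hdiv := Int.emod_add_mul_ediv (x - lo) d
  have hr0 := Int.emod_nonneg (x - lo) hd'.ne'
  have hrd := Int.emod_lt_of_pos (x - lo) hd'
  have hq0 : 0 ≤ (x - lo) / d := Int.ediv_nonneg (by omega) hd'.le
  refine ⟨((x - lo) / d).toNat, ?_, ?_⟩
  · rw [Int.toNat_of_nonneg hq0]
    exact Int.ediv_le_self _ (by omega)
  · rw [Int.toNat_of_nonneg hq0, mem_Icc]
    constructor <;> linarith

theorem mul_le_add_mul_of_abs_le {a b n r q : ℕ} {ρ σ : ℤ} (hb0 : 0 < b) (hab : a + b ≤ n)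
    (hρ : |ρ| ≤ r * n) (hsum : |ρ + (a + b) * σ| ≤ n)
    (hq : (n : ℤ) + (n + 1) ^ 2 * r < r + (a + b) * q) : (n : ℤ) * r ≤ σ + b * q := by
  have hP : (0 : ℤ) < a + b := by positivity
  have hPq : (0 : ℤ) ≤ (a + b) * q := by positivity
  have hPn : ((a + b) * (n * r) : ℤ) ≤ n * (n * r) := by
    gcongr; exact_mod_cast hab
  have hbq : ((a + b) * q : ℤ) ≤ b * ((a + b) * q) :=
    le_mul_of_one_le_left hPq (by exact_mod_cast hb0)
  obtain ⟨hsum₁, -⟩ := abs_le.1 hsum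
  obtain ⟨-, hρ₂⟩ := abs_le.1 hρ
  -- `(a + b) * (σ + b * q) = (ρ + (a + b) * σ) - ρ + b * ((a + b) * q)`
  refine le_of_mul_le_mul_left ?_ hP
  nlinarith

theorem exists_rare_decomposition {a b n : ℕ} (ha0 : 0 < a) (hb0 : 0 < b) (hab : a + b ≤ n)
    {L : Multiset ℤ} (hL : ∀ x ∈ L, |x| ≤ n) (hsum : |L.sum| ≤ n)
    (hm : (2 * n + 1) ^ 4 < L.card) :
    ∃ R ≤ L, ∃ A B : ℕ, A + B + R.card = L.card ∧ A * a - B * b + R.sum = L.sum ∧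
      n * R.card ≤ A ∧ n * R.card ≤ B := by
  obtain ⟨R, Q, rfl, hR⟩ := L.exists_eq_add_nsmul (P := a + b) (by omega)
  have hRL : R ≤ R + (a + b) • Q := Multiset.le_add_right _ _
  have hRcard : R.card ≤ n * (2 * n + 1) :=
    hR.trans (Nat.mul_le_mul (by omega) (Multiset.card_toFinset_le_of_abs_le hL))
  have hRsum := Multiset.abs_sum_le_card_mul fun x hx => hL x (Multiset.mem_of_le hRL hx)
  simp only [Multiset.card_add, Multiset.card_nsmul, Multiset.sum_add, Multiset.sum_nsmul,
    nsmul_eq_mul] at hm hsum ⊢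
  push_cast at hsum
  have hbound : (n : ℤ) + (n + 1) ^ 2 * R.card < R.card + (a + b) * Q.card := by
    have : ((n + 1) ^ 2 * R.card : ℤ) ≤ (n + 1) ^ 2 * (n * (2 * n + 1)) := by
      gcongr; exact_mod_cast hRcard
    have : (n : ℤ) + (n + 1) ^ 2 * (n * (2 * n + 1)) ≤ (2 * n + 1) ^ 4 := by nlinarith
    have hm' : ((2 * n + 1) ^ 4 : ℤ) < R.card + (a + b) * Q.card := by exact_mod_cast hm
    linarith
  have hA := mul_le_add_mul_of_abs_le hb0 hab hRsum hsum hbound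
  have hB := mul_le_add_mul_of_abs_le (a := b) (b := a) (n := n) (r := R.card) (q := Q.card)
    (ρ := -R.sum) (σ := -Q.sum) ha0 (by omega) (by rwa [abs_neg])
    (by rw [← abs_neg]; convert hsum using 2; ring) (by linarith)
  have hA' : ((Q.sum + b * Q.card).toNat : ℤ) = Q.sum + b * Q.card :=
    Int.toNat_of_nonneg (le_trans (by positivity) hA)
  have hB' : ((-Q.sum + a * Q.card).toNat : ℤ) = -Q.sum + a * Q.card :=
    Int.toNat_of_nonneg (le_trans (by positivity) hB)
  refine ⟨R, hRL, (Q.sum + b * Q.card).toNat, (-Q.sum + a * Q.card).toNat, ?_, ?_, ?_, ?_⟩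
  · zify
    rw [hA', hB']
    ring
  · rw [hA', hB']
    push_cast
    ring
  · zify
    exact hA' ▸ hA
  · zify
    exact hB' ▸ hB

section ToeplitzWalks

variable {n : ℕ} {S T : Finset ℕ}

def IsToepStep (S T : Finset ℕ) (x : ℤ) : Prop :=
  (∃ s ∈ S, x = s) ∨ ∃ t ∈ T, x = -t

theorem IsToepStep.abs_le {x : ℤ} (hS : ∀ s ∈ S, s ≤ n)
    (hT : ∀ t ∈ T, t ≤ n) (hx : IsToepStep S T x) : |x| ≤ n := by
  rcases hx with ⟨s, hs, rfl⟩ | ⟨t, ht, rfl⟩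
  · have := hS s hs
    rw [abs_of_nonneg (by positivity)]
    exact_mod_cast this
  · have := hT t ht
    rw [abs_neg, abs_of_nonneg (by positivity)]
    exact_mod_cast this

theorem hasWalk_zero (u : ℤ) : HasWalk n S T 0 u u :=
  ⟨fun _ => u, rfl, rfl, fun _ hi => absurd hi (Nat.not_lt_zero _)⟩

theorem HasWalk.of_toepArc {u v : ℤ} (h : ToepArc n S T u v) : HasWalk n S T 1 u v :=
  ⟨fun i => if i = 0 then u else v, rfl, rfl, fun i hi => by
    obtain rfl : i = 0 := by omega
    simpa using h⟩

theorem HasWalk.append {k l : ℕ} {u w v : ℤ} (h₁ : HasWalk n S T k u w)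
    (h₂ : HasWalk n S T l w v) : HasWalk n S T (k + l) u v := by
  obtain ⟨f, hf0, hfk, hf⟩ := h₁
  obtain ⟨g, hg0, hgl, hg⟩ := h₂
  refine ⟨fun i => if i < k then f i else g (i - k), ?_, ?_, fun i hi => ?_⟩
  · show (if 0 < k then f 0 else g (0 - k)) = u
    split_ifs with hk
    · exact hf0
    · rw [Nat.zero_sub, hg0, ← hfk, ← hf0, show k = 0 by omega]
  · simp [hgl]
  · rcases lt_or_ge i k with hik | hik
    · by_cases hik' : i + 1 < k
      · simpa [hik, hik'] using hf i hik
      · have : i + 1 = k := by omega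
        simpa [hik, hik', hg0, ← hfk, this] using hf i hik
    · have hi' : i + 1 - k = i - k + 1 := by omega
      simpa [not_lt.2 hik, show ¬ i + 1 < k by omega, hi'] using hg (i - k) (by omega)

theorem HasWalk.exists_steps {m : ℕ} {u v : ℤ} (h : HasWalk n S T m u v) :
    ∃ L : Multiset ℤ, L.card = m ∧ L.sum = v - u ∧ ∀ x ∈ L, IsToepStep S T x := by
  obtain ⟨w, hw0, hwm, hw⟩ := h
  refine ⟨(Multiset.range m).map fun i => w (i + 1) - w i, by simp, ?_, ?_⟩
  · change ∑ i ∈ range m, (w (i + 1) - w i) = v - u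
    rw [sum_range_sub, hw0, hwm]
  · simp only [Multiset.mem_map, Multiset.mem_range, forall_exists_index, and_imp]
    rintro _ i hi rfl
    obtain ⟨-, -, ⟨s, hs, hsv⟩ | ⟨t, ht, htv⟩⟩ := hw i hi
    · exact .inl ⟨s, hs, by omega⟩
    · exact .inr ⟨t, ht, by omega⟩

theorem toepArc_add {u : ℤ} {s : ℕ} (hs : s ∈ S) (hu : 1 ≤ u) (hus : u + s ≤ n) :
    ToepArc n S T u (u + s) :=
  ⟨mem_Icc.2 ⟨hu, by omega⟩, mem_Icc.2 ⟨by omega, hus⟩, .inl ⟨s, hs, rfl⟩⟩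

theorem toepArc_sub {u : ℤ} {t : ℕ} (ht : t ∈ T) (hut : 1 ≤ u - t) (hu : u ≤ n) :
    ToepArc n S T u (u - t) :=
  ⟨mem_Icc.2 ⟨by omega, hu⟩, mem_Icc.2 ⟨hut, by omega⟩, .inr ⟨t, ht, rfl⟩⟩

theorem hasWalk_of_mul_sub_mul {a b : ℕ} (ha : a ∈ S) (hb : b ∈ T) (hab : a + b ≤ n)
    {A B : ℕ} {u v : ℤ} (hu : u ∈ Icc (1 : ℤ) n) (hv : v ∈ Icc (1 : ℤ) n)
    (h : A * a - B * b = v - u) : HasWalk n S T (A + B) u v := by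
  rw [mem_Icc] at hu hv
  obtain ⟨k, hk⟩ : ∃ k, A + B = k := ⟨_, rfl⟩
  induction k generalizing A B u with
  | zero =>
    obtain ⟨rfl, rfl⟩ : A = 0 ∧ B = 0 := by omega
    obtain rfl : u = v := by simpa [eq_comm, sub_eq_zero] using h
    exact hasWalk_zero u
  | succ k ih =>
    by_cases hup : 0 < A ∧ u + a ≤ n
    · obtain ⟨A, rfl⟩ : ∃ A', A = A' + 1 := ⟨A - 1, by omega⟩
      have hw := ih (u := u + a) (A := A) (B := B) (by omega)
        (by push_cast at h; linarith) (by omega)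
      convert (HasWalk.of_toepArc (toepArc_add ha hu.1 hup.2)).append hw using 1
      omega
    · obtain ⟨B, rfl⟩ : ∃ B', B = B' + 1 := by
        refine ⟨B - 1, (Nat.succ_pred_eq_of_ne_zero fun hB => ?_).symm⟩
        subst hB
        have : (a : ℤ) ≤ A * a := le_mul_of_one_le_left (by positivity) (by norm_cast; omega)
        push_cast at h
        omega
      have hdown : 1 ≤ u - b := by
        rcases Nat.eq_zero_or_pos A with rfl | hA
        · have : (0 : ℤ) ≤ B * b := by positivity
          push_cast at h
          linarith
        · omega
      have hw := ih (u := u - b) (A := A) (B := B) (by omega)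
        (by push_cast at h; linarith) (by omega)
      convert (HasWalk.of_toepArc (toepArc_sub hb hdown hu.2)).append hw using 1
      omega

theorem exists_hasWalk_before_step {a b : ℕ} (ha : a ∈ S) (hb : b ∈ T) (ha0 : 0 < a)
    (hb0 : 0 < b) (hSb : ∀ s ∈ S, s + b ≤ n) (hTa : ∀ t ∈ T, a + t ≤ n) {x u : ℤ}
    (hx : IsToepStep S T x) (hu : u ∈ Icc (1 : ℤ) n) :
    ∃ i j : ℕ, i ≤ n ∧ j ≤ n ∧ u + i * a - j * b + x ∈ Icc (1 : ℤ) n ∧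
      HasWalk n S T (i + j + 1) u (u + i * a - j * b + x) := by
  have hab : a + b ≤ n := hSb a ha
  rw [mem_Icc] at hu
  rcases hx with ⟨s, hs, rfl⟩ | ⟨t, ht, rfl⟩
  · obtain ⟨j, hj, hp⟩ := exists_sub_mul_mem_Icc (lo := 1) (hi := n - s) hb0
      (by have := hSb s hs; omega) hu.1
    rw [mem_Icc] at hp
    have hw := hasWalk_of_mul_sub_mul (S := S) (A := 0) (B := j) ha hb hab (mem_Icc.2 hu)
      (mem_Icc.2 ⟨hp.1, by omega⟩) (by ring)
    refine ⟨0, j, Nat.zero_le _, by omega, mem_Icc.2 ⟨by omega, by omega⟩, ?_⟩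
    convert hw.append (.of_toepArc (toepArc_add hs hp.1 (by omega))) using 2
    push_cast; ring
  · obtain ⟨i, hi, hp⟩ := exists_sub_mul_mem_Icc (x := -u) (lo := -n) (hi := -(1 + t)) ha0
      (by have := hTa t ht; omega) (by omega)
    rw [mem_Icc] at hp
    have hw := hasWalk_of_mul_sub_mul (S := S) (A := i) (B := 0) ha hb hab (mem_Icc.2 hu)
      (v := u + i * a) (mem_Icc.2 ⟨by omega, by omega⟩) (by ring)
    refine ⟨i, 0, by omega, Nat.zero_le _, mem_Icc.2 ⟨by omega, by omega⟩, ?_⟩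
    convert hw.append (.of_toepArc (toepArc_sub ht (by omega) (by omega))) using 2
    push_cast; ring

theorem hasWalk_of_rare_steps {a b : ℕ} (ha : a ∈ S) (hb : b ∈ T) (ha0 : 0 < a)
    (hb0 : 0 < b) (hSb : ∀ s ∈ S, s + b ≤ n) (hTa : ∀ t ∈ T, a + t ≤ n) {R : Multiset ℤ}
    (hR : ∀ x ∈ R, IsToepStep S T x) {A B : ℕ} (hA : n * R.card ≤ A) (hB : n * R.card ≤ B)
    {u v : ℤ} (hu : u ∈ Icc (1 : ℤ) n) (hv : v ∈ Icc (1 : ℤ) n)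
    (h : A * a - B * b + R.sum = v - u) : HasWalk n S T (A + B + R.card) u v := by
  induction R using Multiset.induction_on generalizing A B u with
  | empty => simpa using hasWalk_of_mul_sub_mul ha hb (hSb a ha) hu hv (by simpa using h)
  | cons x R ih =>
    simp only [Multiset.card_cons, Multiset.sum_cons, Multiset.mem_cons, forall_eq_or_imp]
      at hA hB h hR ⊢
    obtain ⟨i, j, hi, hj, hp, hw⟩ := exists_hasWalk_before_step ha hb ha0 hb0 hSb hTa hR.1 hu
    rw [mul_add, mul_one] at hA hB
    have hw' := ih hR.2 (A := A - i) (B := B - j) (by omega) (by omega) hp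
      (by push_cast [Nat.cast_sub (show i ≤ A by omega), Nat.cast_sub (show j ≤ B by omega)]
          linarith)
    convert hw.append hw' using 1
    omega

theorem hasWalk_iff_exists_steps {a b : ℕ} (ha : a ∈ S) (hb : b ∈ T)
    (ha0 : 0 < a) (hb0 : 0 < b) (hSb : ∀ s ∈ S, s + b ≤ n) (hTa : ∀ t ∈ T, a + t ≤ n)
    {m : ℕ} (hm : (2 * n + 1) ^ 4 < m) {u v : ℤ} (hu : u ∈ Icc (1 : ℤ) n)
    (hv : v ∈ Icc (1 : ℤ) n) :
    HasWalk n S T m u v ↔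
      ∃ L : Multiset ℤ, L.card = m ∧ L.sum = v - u ∧ ∀ x ∈ L, IsToepStep S T x := by
  refine ⟨HasWalk.exists_steps, ?_⟩
  rintro ⟨L, rfl, hsum, hL⟩
  have hLn : ∀ x ∈ L, |x| ≤ n := fun x hx =>
    (hL x hx).abs_le (fun s hs => by have := hSb s hs; omega) fun t ht => by
      have := hTa t ht; omega
  rw [mem_Icc] at hu hv
  obtain ⟨R, hRL, A, B, hcard, hRsum, hA, hB⟩ :=
    exists_rare_decomposition ha0 hb0 (hSb a ha) hLn (by rw [hsum, abs_le]; omega) hm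
  rw [← hcard]
  exact hasWalk_of_rare_steps ha hb ha0 hb0 hSb hTa
    (fun x hx => hL x (Multiset.mem_of_le hRL hx)) hA hB (mem_Icc.2 hu) (mem_Icc.2 hv)
    (hRsum.trans hsum)

end ToeplitzWalks

theorem power_eventually_toeplitz_general (n : ℕ) (S T : Finset ℕ)
    (hS : S.Nonempty) (hT : T.Nonempty)
    (hSsub : S ⊆ Finset.Icc 1 (n - 1)) (hTsub : T ⊆ Finset.Icc 1 (n - 1))
    (hST1 : S.max' hS + T.min' hT ≤ n) (hST2 : S.min' hS + T.max' hT ≤ n) :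
    ∃ M : ℕ, 0 < M ∧ ∀ m : ℕ, M < m →
      ∀ u ∈ Finset.Icc (1 : ℤ) (n : ℤ), ∀ v ∈ Finset.Icc (1 : ℤ) (n : ℤ),
      ∀ u' ∈ Finset.Icc (1 : ℤ) (n : ℤ), ∀ v' ∈ Finset.Icc (1 : ℤ) (n : ℤ),
        v - u = v' - u' → (HasWalk n S T m u v ↔ HasWalk n S T m u' v') := by
  have ha0 : 0 < S.min' hS := (mem_Icc.1 (hSsub (S.min'_mem hS))).1
  have hb0 : 0 < T.min' hT := (mem_Icc.1 (hTsub (T.min'_mem hT))).1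
  have hSb : ∀ s ∈ S, s + T.min' hT ≤ n := fun s hs =>
    (Nat.add_le_add_right (S.le_max' s hs) _).trans hST1
  have hTa : ∀ t ∈ T, S.min' hS + t ≤ n := fun t ht =>
    (Nat.add_le_add_left (T.le_max' t ht) _).trans hST2
  refine ⟨(2 * n + 1) ^ 4, by positivity, fun m hm u hu v hv u' hu' v' hv' huv => ?_⟩
  rw [hasWalk_iff_exists_steps (S.min'_mem hS) (T.min'_mem hT) ha0 hb0 hSb hTa hm hu hv,
    hasWalk_iff_exists_steps (S.min'_mem hS) (T.min'_mem hT) ha0 hb0 hSb hTa hm hu' hv', huv]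

/-- If `max S + min T ≤ n` and `min S + max T ≤ n`, then for all
sufficiently large `m`, existence of a directed walk of length `m` between two
vertices depends only on their difference (i.e. high Boolean powers of `T_n⟨S;T⟩`
are Toeplitz matrices). -/
theorem power_eventually_toeplitz (n : ℕ) (hn : 2 ≤ n) (S T : Finset ℕ)
    (hS : S.Nonempty) (hT : T.Nonempty)
    (hSsub : S ⊆ Finset.Icc 1 (n - 1)) (hTsub : T ⊆ Finset.Icc 1 (n - 1))
    (hST1 : S.max' hS + T.min' hT ≤ n) (hST2 : S.min' hS + T.max' hT ≤ n) :
    ∃ M : ℕ, 0 < M ∧ ∀ m : ℕ, M < m →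
      ∀ u ∈ Finset.Icc (1 : ℤ) (n : ℤ), ∀ v ∈ Finset.Icc (1 : ℤ) (n : ℤ),
      ∀ u' ∈ Finset.Icc (1 : ℤ) (n : ℤ), ∀ v' ∈ Finset.Icc (1 : ℤ) (n : ℤ),
        v - u = v' - u' → (HasWalk n S T m u v ↔ HasWalk n S T m u' v') :=
  power_eventually_toeplitz_general n S T hS hT hSsub hTsub hST1 hST2
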